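/- arXiv:1006.0455 — 2 statements merged into one kernel-verified Lean document; each statement's English description precedes it below -/
import Mathlib

section
/- Let K be a field and S_1 = K⟨x, y | yx = 1⟩. Then the element y - 1 is a regular element of S_1. -/
/-- Defining relation `y * x = 1` for the algebra of one-sided inverses `S₁(R)`. -/
inductive S1Rel (R : Type) [CommRing R] : FreeAlgebra R Bool → FreeAlgebra R Bool → Prop
  | rel : S1Rel R (FreeAlgebra.ι R false * FreeAlgebra.ι R true) 1

/-- `S₁(R) = R⟨x, y | yx = 1⟩`, the algebra of one-sided inverses of `R[x]`. -/
abbrev S1 (R : Type) [CommRing R] := RingQuot (S1Rel R)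

/-- The generator `x` of `S₁(R)`. -/
noncomputable def S1.x (R : Type) [CommRing R] : S1 R :=
  RingQuot.mkRingHom (S1Rel R) (FreeAlgebra.ι R true)

/-- The generator `y` of `S₁(R)`. -/
noncomputable def S1.y (R : Type) [CommRing R] : S1 R :=
  RingQuot.mkRingHom (S1Rel R) (FreeAlgebra.ι R false)

/-!
Give `S₁(R)` the `ℤ`-grading with `deg x = 1`, `deg y = -1`: the relation `y x = 1` is homogeneous,
so the grading is an algebra map `a ↦ ∑ aₙ Tⁿ` into Laurent polynomials over `S₁(R)`, injective
since `T ↦ 1` undoes it. It sends `y - 1` to `y T⁻¹ - 1`, and `c T⁻¹ - 1` is regular in any Laurent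
polynomial ring: if `c T⁻¹ p = p` (or `p c T⁻¹ = p`) with `p ≠ 0`, the top-degree term of `p`
would have to come from a term of `p` of higher degree.
-/

open scoped nonZeroDivisors

namespace AddMonoidAlgebra

variable {R G : Type*} [AddMonoid G] [LinearOrder G]

theorem eq_zero_of_single_mul_eq_self [Semiring R] [AddRightStrictMono G] {n : G} (hn : n < 0)
    {c : R} {p : R[G]} (h : single n c * p = p) : p = 0 := by
  classical
  by_contra hp
  obtain ⟨g, hg, hmax⟩ := p.coeff.support.exists_max_image id (by simpa using hp)
  rw [← h] at hg
  obtain ⟨g', hg', rfl⟩ := Finset.mem_image.mp (support_coeff_single_mul_subset p c n hg)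
  exact (hmax g' hg').not_gt (add_lt_of_neg_left g' hn)

theorem eq_zero_of_mul_single_eq_self [Semiring R] [AddLeftStrictMono G] {n : G} (hn : n < 0)
    {c : R} {p : R[G]} (h : p * single n c = p) : p = 0 := by
  classical
  by_contra hp
  obtain ⟨g, hg, hmax⟩ := p.coeff.support.exists_max_image id (by simpa using hp)
  rw [← h] at hg
  obtain ⟨g', hg', rfl⟩ := Finset.mem_image.mp (support_coeff_mul_single_subset p c n hg)
  exact (hmax g' hg').not_gt (add_lt_of_neg_right g' hn)

theorem single_sub_one_mem_nonZeroDivisors [Ring R] [AddLeftStrictMono G] [AddRightStrictMono G]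
    {n : G} (hn : n < 0) (c : R) : single n c - 1 ∈ R[G]⁰ := by
  refine ⟨fun p hp => ?_, fun p hp => ?_⟩
  · rw [sub_mul, one_mul, sub_eq_zero] at hp
    exact eq_zero_of_single_mul_eq_self hn hp
  · rw [mul_sub, mul_one, sub_eq_zero] at hp
    exact eq_zero_of_mul_single_eq_self hn hp

end AddMonoidAlgebra

namespace S1

open AddMonoidAlgebra

variable (R : Type) [CommRing R]

theorem y_mul_x : y R * x R = 1 := by
  rw [x, y, ← map_mul, RingQuot.mkRingHom_rel S1Rel.rel, map_one]

theorem mkAlgHom_ι_true : RingQuot.mkAlgHom R (S1Rel R) (FreeAlgebra.ι R true) = x R := by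
  rw [x, ← RingQuot.mkAlgHom_coe R, RingHom.coe_coe]

theorem mkAlgHom_ι_false : RingQuot.mkAlgHom R (S1Rel R) (FreeAlgebra.ι R false) = y R := by
  rw [y, ← RingQuot.mkAlgHom_coe R, RingHom.coe_coe]

noncomputable def coaction : S1 R →ₐ[R] AddMonoidAlgebra (S1 R) ℤ :=
  RingQuot.liftAlgHom R ⟨FreeAlgebra.lift R fun b =>
    if b then single 1 (x R) else single (-1) (y R), by
      rintro _ _ ⟨⟩
      rw [map_mul, map_one, FreeAlgebra.lift_ι_apply, FreeAlgebra.lift_ι_apply,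
        if_neg Bool.false_ne_true, if_pos rfl, single_mul_single, neg_add_cancel, y_mul_x,
        one_def]⟩

theorem coaction_x : coaction R (x R) = single 1 (x R) := by
  rw [← mkAlgHom_ι_true, coaction, RingQuot.liftAlgHom_mkAlgHom_apply, FreeAlgebra.lift_ι_apply,
    if_pos rfl, mkAlgHom_ι_true]

theorem coaction_y : coaction R (y R) = single (-1) (y R) := by
  rw [← mkAlgHom_ι_false, coaction, RingQuot.liftAlgHom_mkAlgHom_apply, FreeAlgebra.lift_ι_apply,
    if_neg Bool.false_ne_true, mkAlgHom_ι_false]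

theorem coaction_injective : Function.Injective (coaction R) := by
  let forgetGrading := liftNCAlgHom (AlgHom.id R (S1 R)) (1 : Multiplicative ℤ →* S1 R)
    fun _ _ => Commute.one_right _
  have h : forgetGrading.comp (coaction R) = AlgHom.id R (S1 R) := by
    ext b
    cases b <;> simp only [forgetGrading, Function.comp_apply, AlgHom.comp_apply, mkAlgHom_ι_true,
      mkAlgHom_ι_false, coaction_x, coaction_y, coe_liftNCAlgHom, liftNC_single,
      MonoidHom.one_apply, mul_one] <;> rfl
  exact Function.LeftInverse.injective (g := forgetGrading) (AlgHom.congr_fun h)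

theorem y_sub_one_mem_nonZeroDivisors : y R - 1 ∈ (S1 R)⁰ :=
  mem_nonZeroDivisors_of_injective (coaction_injective R) <| by
    rw [map_sub, map_one, coaction_y]
    exact single_sub_one_mem_nonZeroDivisors (by norm_num) _

end S1

/-- Let `K` be a field and `S₁ = K⟨x, y | yx = 1⟩`. Then `y - 1` is a regular element of
`S₁`: left and right multiplication by `y - 1` are injective. -/
theorem S1.y_sub_one_regular (K : Type) [Field K] :
    Function.Injective (fun a : S1 K => (S1.y K - 1) * a) ∧
    Function.Injective (fun a : S1 K => a * (S1.y K - 1)) :=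
  have h := isRegular_iff_mem_nonZeroDivisors.mpr (S1.y_sub_one_mem_nonZeroDivisors K)
  ⟨h.left, h.right⟩
end

section
/- Let S_1 = Z⟨x, y | yx = 1⟩ and F = span of the elements E_{ij} = x^i y^j - x^{i+1} y^{j+1} for i, j ∈ ℕ. Then the right ideal (x-1)S_1 is not a two-sided ideal of S_1; in particular, there is no element a ∈ S_1 with (x-1)a = E_{00}. -/
/-!
`S₁(R)` acts on `R[X]` with `x` as multiplication by `X` and `y` as `divX`. Applying
`(x - 1) a = 1 - x y` to the polynomial `1` gives `(X - 1) q = 1`, impossible since `X - 1` is not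
a unit. If `y (x - 1) = (x - 1) c`, then `(x - 1) (c (1 - x y)) = (1 - y) (1 - x y) = 1 - x y`,
so the first claim reduces to the second.
-/

open Polynomial

namespace Polynomial

variable {R : Type*} [CommRing R]

@[simp]
theorem divX_X_mul (p : R[X]) : divX (X * p) = p := by
  ext n
  simp [coeff_X_mul]

noncomputable def divXLinearMap : R[X] →ₗ[R] R[X] where
  toFun := divX
  map_add' _ _ := divX_add
  map_smul' c p := by ext n; simp

@[simp]
theorem divXLinearMap_apply (p : R[X]) : divXLinearMap p = divX p := rfl

end Polynomial

theorem mul_sub_one_mul_one_sub_mul {A : Type*} [Ring A] {x y : A} (h : y * x = 1) :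
    y * (x - 1) * (1 - x * y) = 1 - x * y := by
  simp only [mul_sub, sub_mul, h, mul_one, one_mul, ← mul_assoc]
  abel

namespace S1

variable (R : Type) [CommRing R]

theorem y_mul_x_s8 : S1.y R * S1.x R = 1 := by
  rw [S1.x, S1.y, ← map_mul, RingQuot.mkRingHom_rel S1Rel.rel, map_one]

noncomputable def polynomialRep : S1 R →ₐ[R] Module.End R R[X] :=
  RingQuot.liftAlgHom R ⟨FreeAlgebra.lift R
    (fun b => if b then LinearMap.mulLeft R X else divXLinearMap), by
    rintro _ _ ⟨⟩
    exact LinearMap.ext fun p => by simp⟩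

@[simp]
theorem polynomialRep_x : polynomialRep R (S1.x R) = LinearMap.mulLeft R X := by
  rw [S1.x, ← RingQuot.mkAlgHom_coe R, AlgHom.coe_toRingHom, polynomialRep,
    RingQuot.liftAlgHom_mkAlgHom_apply]
  simp

@[simp]
theorem polynomialRep_y : polynomialRep R (S1.y R) = divXLinearMap := by
  rw [S1.y, ← RingQuot.mkAlgHom_coe R, AlgHom.coe_toRingHom, polynomialRep,
    RingQuot.liftAlgHom_mkAlgHom_apply]
  simp

theorem not_exists_x_sub_one_mul_eq_one_sub_x_mul_y [Nontrivial R] :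
    ¬ ∃ a : S1 R, (S1.x R - 1) * a = 1 - S1.x R * S1.y R := by
  rintro ⟨a, ha⟩
  have h := congrArg (fun s => polynomialRep R s 1) ha
  simp only [map_mul, map_sub, map_one, polynomialRep_x, polynomialRep_y, Module.End.mul_apply,
    LinearMap.sub_apply, Module.End.one_apply, LinearMap.mulLeft_apply, divXLinearMap_apply,
    divX_one, mul_zero, sub_zero] at h
  exact not_isUnit_X_sub_C (1 : R) (.of_mul_eq_one _ (by rwa [map_one, sub_mul, one_mul]))

end S1

/-- In `S₁(ℤ)`, the right ideal `(x-1)S₁` is not a two-sided ideal; in particular there is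
no element `a ∈ S₁` with `(x-1)a = E₀₀ = 1 - xy`. -/
theorem S1.x_sub_one_not_right_normal :
    (¬ ∀ a b : S1 ℤ, ∃ c : S1 ℤ, a * ((S1.x ℤ - 1) * b) = (S1.x ℤ - 1) * c) ∧
    ¬ ∃ a : S1 ℤ, (S1.x ℤ - 1) * a = 1 - S1.x ℤ * S1.y ℤ := by
  refine ⟨fun h => ?_, S1.not_exists_x_sub_one_mul_eq_one_sub_x_mul_y ℤ⟩
  obtain ⟨c, hc⟩ := h (S1.y ℤ) 1
  refine S1.not_exists_x_sub_one_mul_eq_one_sub_x_mul_y ℤ ⟨c * (1 - S1.x ℤ * S1.y ℤ), ?_⟩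
  rw [← mul_assoc, ← hc, mul_one, mul_sub_one_mul_one_sub_mul (S1.y_mul_x_s8 ℤ)]
end
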